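/- (Dorić–Kadelburg–Radenović) Let (X, d, ≤) be an ordered metric space and f a self-map on X such that: (a) (X, d) is complete; (b) for all x, y ∈ X, x ≺≻ y implies f(x) ≺≻ f(y); (c) either f is continuous or (X, d, ≤) satisfies: whenever a sequence (x_n) converges to x in X, then x_n ≺≻ x for all sufficiently large n; (d) there exists x₀ ∈ X with x₀ ≺≻ f(x₀); (e) there exists α ∈ [0,1) such that d(f(x), f(y)) ≤ α·d(x, y) for all x, y ∈ X with x ≺≻ y. Then f has a fixed point in X. Moreover, if (f) for each x, y ∈ X there exists z ∈ X with x ≺≻ z and y ≺≻ z, then the fixed point u is unique and for each x ∈ X the sequence of iterates fⁿ(x) converges to u. -/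

import Mathlib

open Filter Topology

section

variable {X : Type*} [MetricSpace X] [PartialOrder X]

/-- Two elements of an ordered set are comparable. -/
def Cmp (x y : X) : Prop := x ≤ y ∨ y ≤ x

/-- `f` is `g`-comparable: `g x ≺≻ g y` implies `f x ≺≻ f y`. -/
def GComparable (f g : X → X) : Prop :=
  ∀ x y : X, Cmp (g x) (g y) → Cmp (f x) (f y)

/-- The `g`-TCC property of an ordered metric space. -/
def GTCC (g : X → X) : Prop :=
  ∀ (x : ℕ → X) (l : X), (∀ n, Cmp (x n) (x (n + 1))) →
    Tendsto x atTop (𝓝 l) →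
      ∃ φ : ℕ → ℕ, StrictMono φ ∧ ∀ k, Cmp (g (x (φ k))) (g l)

/-- The TCC property of a subset of an ordered metric space. -/
def TCCOn (Y : Set X) : Prop :=
  ∀ (x : ℕ → X), (∀ n, x n ∈ Y) → ∀ l ∈ Y, (∀ n, Cmp (x n) (x (n + 1))) →
    Tendsto x atTop (𝓝 l) →
      ∃ φ : ℕ → ℕ, StrictMono φ ∧ ∀ k, Cmp (x (φ k)) l

/-- The TCC property of an ordered metric space. -/
def TCC (X : Type*) [MetricSpace X] [PartialOrder X] : Prop :=
  ∀ (x : ℕ → X) (l : X), (∀ n, Cmp (x n) (x (n + 1))) →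
    Tendsto x atTop (𝓝 l) →
      ∃ φ : ℕ → ℕ, StrictMono φ ∧ ∀ k, Cmp (x (φ k)) l

/-- The pair `(f, g)` is compatible. -/
def Compatible (f g : X → X) : Prop :=
  ∀ (x : ℕ → X) (l : X), Tendsto (fun n => g (x n)) atTop (𝓝 l) →
    Tendsto (fun n => f (x n)) atTop (𝓝 l) →
      Tendsto (fun n => dist (g (f (x n))) (f (g (x n)))) atTop (𝓝 0)

/-- `f` is `g`-continuous. -/
def GContinuous (f g : X → X) : Prop :=
  ∀ (x : ℕ → X) (a : X), Tendsto (fun n => g (x n)) atTop (𝓝 (g a)) →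
    Tendsto (fun n => f (x n)) atTop (𝓝 (f a))

/-- There exists a `≺≻`-chain between `a` and `b` inside `E`. -/
def ChainIn (E : Set X) (a b : X) : Prop :=
  ∃ (k : ℕ) (e : ℕ → X), 2 ≤ k ∧ (∀ i < k, e i ∈ E) ∧ e 0 = a ∧ e (k - 1) = b ∧
    ∀ i, i + 1 < k → Cmp (e i) (e (i + 1))

end

/-! Consecutive Picard iterates of a point comparable with its image are comparable, and `f`
contracts their distances by `α`, so the orbit is Cauchy with some limit `u`. Continuity of `f`, or
eventual comparability of the iterates with `u`, gives `f u = u`. Under (f), any two points have a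
common comparable point `z`, so both of their orbits merge with that of `z`; this yields global
convergence to `u`, and hence uniqueness. -/

lemma Cmp.iterate {X : Type*} [PartialOrder X] {f : X → X}
    (hf : ∀ x y, Cmp x y → Cmp (f x) (f y)) {a b : X} (h : Cmp a b) (n : ℕ) :
    Cmp (f^[n] a) (f^[n] b) := by
  induction n with
  | zero => exact h
  | succ n ih =>
    rw [Function.iterate_succ_apply', Function.iterate_succ_apply']
    exact hf _ _ ih

section Contraction

variable {X : Type*} [PseudoMetricSpace X] [PartialOrder X] {f : X → X} {α : ℝ}

lemma dist_iterate_le_of_cmp (hf : ∀ x y, Cmp x y → Cmp (f x) (f y)) (hα : 0 ≤ α)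
    (hcon : ∀ x y, Cmp x y → dist (f x) (f y) ≤ α * dist x y) {a b : X} (h : Cmp a b)
    (n : ℕ) : dist (f^[n] a) (f^[n] b) ≤ α ^ n * dist a b := by
  induction n with
  | zero => simp
  | succ n ih =>
    rw [Function.iterate_succ_apply', Function.iterate_succ_apply']
    calc dist (f (f^[n] a)) (f (f^[n] b)) ≤ α * dist (f^[n] a) (f^[n] b) :=
          hcon _ _ (h.iterate hf n)
      _ ≤ α * (α ^ n * dist a b) := mul_le_mul_of_nonneg_left ih hα
      _ = α ^ (n + 1) * dist a b := by ring

lemma tendsto_dist_iterate_of_cmp (hf : ∀ x y, Cmp x y → Cmp (f x) (f y)) (hα : 0 ≤ α)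
    (hα1 : α < 1) (hcon : ∀ x y, Cmp x y → dist (f x) (f y) ≤ α * dist x y) {a b : X}
    (h : Cmp a b) : Tendsto (fun n => dist (f^[n] a) (f^[n] b)) atTop (𝓝 0) := by
  refine squeeze_zero (fun _ => dist_nonneg) (dist_iterate_le_of_cmp hf hα hcon h) ?_
  simpa using (tendsto_pow_atTop_nhds_zero_of_lt_one hα hα1).mul_const (dist a b)

lemma tendsto_dist_iterate_of_cmp_of_cmp (hf : ∀ x y, Cmp x y → Cmp (f x) (f y))
    (hα : 0 ≤ α) (hα1 : α < 1) (hcon : ∀ x y, Cmp x y → dist (f x) (f y) ≤ α * dist x y)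
    {x y z : X} (hxz : Cmp x z) (hyz : Cmp y z) :
    Tendsto (fun n => dist (f^[n] x) (f^[n] y)) atTop (𝓝 0) := by
  refine squeeze_zero (fun _ => dist_nonneg) (fun n => dist_triangle_right _ _ (f^[n] z)) ?_
  simpa using (tendsto_dist_iterate_of_cmp hf hα hα1 hcon hxz).add
    (tendsto_dist_iterate_of_cmp hf hα hα1 hcon hyz)

lemma cauchySeq_iterate_of_cmp_apply (hf : ∀ x y, Cmp x y → Cmp (f x) (f y)) (hα : 0 ≤ α)
    (hα1 : α < 1) (hcon : ∀ x y, Cmp x y → dist (f x) (f y) ≤ α * dist x y) {x : X}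
    (h : Cmp x (f x)) : CauchySeq (fun n => f^[n] x) :=
  cauchySeq_of_le_geometric α (dist x (f x)) hα1 fun n => by
    rw [Function.iterate_succ_apply, mul_comm]
    exact dist_iterate_le_of_cmp hf hα hcon h n

lemma tendsto_comp_of_eventually_cmp (hcon : ∀ x y, Cmp x y → dist (f x) (f y) ≤ α * dist x y)
    {s : ℕ → X} {u : X} (hs : Tendsto s atTop (𝓝 u)) (hsu : ∀ᶠ n in atTop, Cmp (s n) u) :
    Tendsto (f ∘ s) atTop (𝓝 (f u)) := by
  refine tendsto_iff_dist_tendsto_zero.2 <| squeeze_zero' (.of_forall fun _ => dist_nonneg)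
    (hsu.mono fun n hn => hcon _ _ hn) ?_
  simpa using (tendsto_iff_dist_tendsto_zero.1 hs).const_mul α

end Contraction

/-- Theorem 1.6 (Dorić–Kadelburg–Radenović). -/
theorem stmt19 {X : Type*} [MetricSpace X] [PartialOrder X] [CompleteSpace X]
    (f : X → X)
    (hb : ∀ x y : X, Cmp x y → Cmp (f x) (f y))
    (hc : Continuous f ∨
      ∀ (x : ℕ → X) (l : X), Tendsto x atTop (𝓝 l) → ∀ᶠ n in atTop, Cmp (x n) l)
    (hd : ∃ x₀ : X, Cmp x₀ (f x₀))
    (he : ∃ α : ℝ, 0 ≤ α ∧ α < 1 ∧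
      ∀ x y : X, Cmp x y → dist (f x) (f y) ≤ α * dist x y) :
    (∃ x : X, f x = x) ∧
      ((∀ x y : X, ∃ z : X, Cmp x z ∧ Cmp y z) →
        ∃ u : X, f u = u ∧ (∀ w : X, f w = w → w = u) ∧
          ∀ x : X, Tendsto (fun n => f^[n] x) atTop (𝓝 u)) := by
  obtain ⟨x₀, hx₀⟩ := hd
  obtain ⟨α, hα, hα1, hcon⟩ := he
  obtain ⟨u, hu⟩ :=
    cauchySeq_tendsto_of_complete (cauchySeq_iterate_of_cmp_apply hb hα hα1 hcon hx₀)
  have hfu : Tendsto (f ∘ fun n => f^[n] x₀) atTop (𝓝 (f u)) :=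
    hc.elim (fun hcont => (hcont.tendsto u).comp hu)
      fun hcmp => tendsto_comp_of_eventually_cmp hcon hu (hcmp _ u hu)
  have hfix : f u = u := by
    refine tendsto_nhds_unique hfu ?_
    simpa only [Function.comp_def, ← Function.iterate_succ_apply' f]
      using (tendsto_add_atTop_iff_nat 1).2 hu
  refine ⟨⟨u, hfix⟩, fun hcommon => ?_⟩
  have hconv : ∀ x, Tendsto (fun n => f^[n] x) atTop (𝓝 u) := fun x => by
    obtain ⟨z, hxz, huz⟩ := hcommon x u
    have := tendsto_dist_iterate_of_cmp_of_cmp hb hα hα1 hcon hxz huz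
    simp only [Function.iterate_fixed hfix] at this
    exact tendsto_iff_dist_tendsto_zero.2 this
  refine ⟨u, hfix, fun w hw => tendsto_nhds_unique ?_ (hconv w), hconv⟩
  simpa only [Function.iterate_fixed hw] using tendsto_const_nhds
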